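/- arXiv:0808.1873 — 2 statements merged into one kernel-verified Lean document; each statement's English description precedes it below -/
import Mathlib

section
/- Let K ⊆ [0,1] be the middle-thirds Cantor set. Then for every Borel set F ⊆ ℝ, the one-dimensional Lebesgue measure satisfies m_1(F + K) ≥ (1/2) · m_1(F)^γ, where γ = 1 − log 2/log 3. -/
open MeasureTheory Set
open scoped Pointwise ENNReal

/-- The middle-thirds Cantor set `{ Σ_{j≥1} s_j 3^{−j} : s_j ∈ {0,2} }`. -/
def middleThirdsCantor : Set ℝ :=
  {x | ∃ s : ℕ → ℕ, (∀ j, s j = 0 ∨ s j = 2) ∧ x = ∑' j : ℕ, (s j : ℝ) / 3 ^ (j + 1)}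

/-!
Discretize at scale `3⁻ⁿ`. Let `Dₙ ⊆ ℤ` be the integers whose `n` ternary digits are all `0` or
`2`, so that `Dₙ / 3ⁿ ⊆ K`. If a compact set `C` meets the triadic cells of length `3⁻ⁿ` indexed
by a finite set `A ⊆ ℤ`, then the cells indexed by `A + Dₙ` lie in `C + K` thickened by `3⁻ⁿ`.
The combinatorial core is `2ⁿ |A|^γ ≤ |A + Dₙ|`: by induction on `n`, splitting `A` into its
residue classes modulo `3`, each residue class of `A + Dₙ₊₁` contains two of the three translated
copies of the sets `Aᵣ + Dₙ`, and `2 (a + b + c)^γ ≤ max(a,b)^γ + max(b,c)^γ + max(c,a)^γ`.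
As `3^γ = 3 / 2`, this says `(|A| / 3ⁿ)^γ ≤ |A + Dₙ| / 3ⁿ`, hence `m(C)^γ ≤ m(C + K)` in the limit
`n → ∞`; inner regularity passes from compact `C` to Borel `F`.
-/

namespace CantorSumset

open Real Finset Metric Filter Topology

noncomputable def cantorCodim : ℝ := 1 - Real.log 2 / Real.log 3

local notation "γ" => cantorCodim

lemma three_rpow_cantorCodim : (3 : ℝ) ^ γ = 3 / 2 := by
  rw [cantorCodim, log_div_log, rpow_sub (by norm_num), rpow_one, rpow_logb] <;> norm_num

lemma inv_three_rpow_cantorCodim : (3⁻¹ : ℝ) ^ γ = 2 / 3 := by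
  rw [inv_rpow (by norm_num), three_rpow_cantorCodim]; norm_num

lemma quarter_le_cantorCodim : 1 / 4 ≤ γ := by
  have h : log 16 ≤ log 27 := log_le_log (by norm_num) (by norm_num)
  rw [show (16 : ℝ) = 2 ^ 4 by norm_num, show (27 : ℝ) = 3 ^ 3 by norm_num, log_pow, log_pow] at h
  have := log_pos (by norm_num : (1 : ℝ) < 3)
  rw [cantorCodim, le_sub_comm, div_le_iff₀ this]
  push_cast at h
  linarith

lemma cantorCodim_le_half : γ ≤ 1 / 2 := by
  have h : log 3 ≤ log 4 := log_le_log (by norm_num) (by norm_num)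
  rw [show (4 : ℝ) = 2 ^ 2 by norm_num, log_pow] at h
  have := log_pos (by norm_num : (1 : ℝ) < 3)
  rw [cantorCodim, sub_le_comm, le_div_iff₀ this]
  push_cast at h
  linarith

lemma cantorCodim_pos : 0 < γ := by linarith [quarter_le_cantorCodim]

lemma cantorCodim_lt_one : γ < 1 := by linarith [cantorCodim_le_half]

lemma concaveOn_rpow_cantorCodim : ConcaveOn ℝ (Set.Ici 0) fun x : ℝ ↦ x ^ γ :=
  concaveOn_rpow cantorCodim_pos.le cantorCodim_lt_one.le

lemma two_mul_le_rpow_cantorCodim {t : ℝ} (h0 : 0 ≤ t) (h : t ≤ 3⁻¹) : 2 * t ≤ t ^ γ := by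
  have := concaveOn_rpow_cantorCodim.2 (mem_Ici.2 le_rfl) (mem_Ici.2 (by norm_num : (0 : ℝ) ≤ 3⁻¹))
    (by linarith : 0 ≤ 1 - 3 * t) (by linarith : 0 ≤ 3 * t) (by ring)
  simp only [smul_eq_mul, inv_three_rpow_cantorCodim, zero_rpow cantorCodim_pos.ne'] at this
  rwa [show (1 - 3 * t) * 0 + 3 * t * 3⁻¹ = t by ring,
    show (1 - 3 * t) * 0 + 3 * t * (2 / 3) = 2 * t by ring] at this

lemma one_add_div_two_le_rpow_cantorCodim {t : ℝ} (h0 : 3⁻¹ ≤ t) (h : t ≤ 1) :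
    (1 + t) / 2 ≤ t ^ γ := by
  have := concaveOn_rpow_cantorCodim.2 (mem_Ici.2 (by norm_num : (0 : ℝ) ≤ 3⁻¹))
    (mem_Ici.2 zero_le_one) (by linarith : 0 ≤ 3 / 2 * (1 - t)) (by linarith : 0 ≤ (3 * t - 1) / 2)
    (by ring)
  simp only [smul_eq_mul, inv_three_rpow_cantorCodim, one_rpow] at this
  rwa [show 3 / 2 * (1 - t) * 3⁻¹ + (3 * t - 1) / 2 * 1 = t by ring,
    show 3 / 2 * (1 - t) * (2 / 3) + (3 * t - 1) / 2 * 1 = (1 + t) / 2 by ring] at this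

/-- Tight at `t = 0` and at `t = 1`; in between, bound `(1 + 2t)^γ` by its tangent line at
`t = 0` or `t = 1` and `t^γ` by the chords through `(0, 0)`, `(1/3, 2/3)`, `(1, 1)`. -/
lemma two_mul_one_add_two_mul_rpow_le {t : ℝ} (h0 : 0 ≤ t) (h1 : t ≤ 1) :
    2 * (1 + 2 * t) ^ γ ≤ 2 + t ^ γ := by
  rcases le_total t 3⁻¹ with ht | ht
  · have := rpow_one_add_le_one_add_mul_self (by linarith : -1 ≤ 2 * t)
      cantorCodim_pos.le cantorCodim_lt_one.le
    nlinarith [two_mul_le_rpow_cantorCodim h0 ht, cantorCodim_le_half]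
  · have htangent : (1 + 2 * t) ^ γ ≤ 3 / 2 * (1 + γ * (-(2 * (1 - t) / 3))) := by
      rw [show 1 + 2 * t = 3 * (1 + -(2 * (1 - t) / 3)) by ring,
        mul_rpow (by norm_num) (by linarith), three_rpow_cantorCodim]
      gcongr
      exact rpow_one_add_le_one_add_mul_self (by linarith) cantorCodim_pos.le cantorCodim_lt_one.le
    nlinarith [one_add_div_two_le_rpow_cantorCodim ht h1, quarter_le_cantorCodim]

lemma two_mul_add_two_mul_rpow_le {a b : ℝ} (hb : 0 ≤ b) (hba : b ≤ a) :
    2 * (a + 2 * b) ^ γ ≤ 2 * a ^ γ + b ^ γ := by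
  rcases (hb.trans hba).eq_or_lt with rfl | ha
  · simp [le_antisymm hba hb, zero_rpow cantorCodim_pos.ne']
  have hab : a + 2 * b = a * (1 + 2 * (b / a)) := by field_simp
  have hba' : b = a * (b / a) := by field_simp
  have key := two_mul_one_add_two_mul_rpow_le (div_nonneg hb ha.le) ((div_le_one ha).2 hba)
  calc 2 * (a + 2 * b) ^ γ = a ^ γ * (2 * (1 + 2 * (b / a)) ^ γ) := by
        rw [hab, mul_rpow ha.le (by positivity)]; ring
    _ ≤ a ^ γ * (2 + (b / a) ^ γ) := by gcongr
    _ = 2 * a ^ γ + b ^ γ := by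
        rw [mul_add, ← mul_rpow ha.le (div_nonneg hb ha.le), ← hba']; ring

lemma two_mul_add_add_rpow_le_of_le {a b c : ℝ} (hc : 0 ≤ c) (hcb : c ≤ b) (hba : b ≤ a) :
    2 * (a + b + c) ^ γ ≤ 2 * a ^ γ + b ^ γ :=
  calc 2 * (a + b + c) ^ γ ≤ 2 * (a + 2 * b) ^ γ := by
        gcongr 2 * ?_
        exact rpow_le_rpow (by linarith) (by linarith) cantorCodim_pos.le
    _ ≤ 2 * a ^ γ + b ^ γ := two_mul_add_two_mul_rpow_le (hc.trans hcb) hba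

lemma two_mul_add_add_rpow_le_max {a b c : ℝ} (ha : 0 ≤ a) (hb : 0 ≤ b) (hc : 0 ≤ c) :
    2 * (a + b + c) ^ γ ≤ max a b ^ γ + max b c ^ γ + max c a ^ γ := by
  rcases le_total a b with hab | hba
  · rcases le_total b c with hbc | hcb
    · rw [max_eq_right hab, max_eq_right hbc, max_eq_left (hab.trans hbc),
        show a + b + c = c + b + a by ring]
      linarith [two_mul_add_add_rpow_le_of_le ha hab hbc]
    rcases le_total a c with hac | hca
    · rw [max_eq_right hab, max_eq_left hcb, max_eq_left hac, show a + b + c = b + c + a by ring]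
      linarith [two_mul_add_add_rpow_le_of_le ha hac hcb]
    · rw [max_eq_right hab, max_eq_left hcb, max_eq_right hca, show a + b + c = b + a + c by ring]
      linarith [two_mul_add_add_rpow_le_of_le hc hca hab]
  rcases le_total a c with hac | hca
  · rw [max_eq_left hba, max_eq_right (hba.trans hac), max_eq_left hac,
      show a + b + c = c + a + b by ring]
    linarith [two_mul_add_add_rpow_le_of_le hb hba hac]
  rcases le_total b c with hbc | hcb
  · rw [max_eq_left hba, max_eq_right hbc, max_eq_right hca, show a + b + c = a + c + b by ring]
    linarith [two_mul_add_add_rpow_le_of_le hb hbc hca]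
  · rw [max_eq_left hba, max_eq_left hcb, max_eq_right hca]
    linarith [two_mul_add_add_rpow_le_of_le hc hcb hba]

/-- The integers `∑_{j<n} s_j 3^j` with all `s_j ∈ {0, 2}`. -/
def cantorNumerals : ℕ → Finset ℤ
  | 0 => {0}
  | n + 1 => (cantorNumerals n).image (3 * ·) ∪ (cantorNumerals n).image (3 * · + 2)

lemma three_mul_add_mem_cantorNumerals {n : ℕ} {d e : ℤ} (hd : d ∈ cantorNumerals n)
    (he : e = 0 ∨ e = 2) : 3 * d + e ∈ cantorNumerals (n + 1) := by
  rcases he with rfl | rfl <;> simp [cantorNumerals, hd]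

/-- `{b | 3 * b + r ∈ A}`, for `0 ≤ r < 3`. -/
def residueQuotient (A : Finset ℤ) (r : ℤ) : Finset ℤ := {a ∈ A | a % 3 = r}.image (· / 3)

lemma card_residueQuotient (A : Finset ℤ) (r : ℤ) :
    #(residueQuotient A r) = #{a ∈ A | a % 3 = r} :=
  card_image_of_injOn fun x hx y hy (hxy : x / 3 = y / 3) => by
    simp only [coe_filter, Set.mem_ofPred_eq] at hx hy
    omega

lemma card_residueQuotient_add_le (A : Finset ℤ) (n : ℕ) {r e : ℤ} (he : e = 0 ∨ e = 2) :
    #(residueQuotient A r + cantorNumerals n)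
      ≤ #{z ∈ A + cantorNumerals (n + 1) | z % 3 = (r + e) % 3} := by
  refine card_le_card_of_injOn (fun m => 3 * m + r + e) ?_ fun x _ y _ h => by
    simp only at h; omega
  intro m hm
  obtain ⟨_, hb, d, hd, rfl⟩ := Finset.mem_add.1 hm
  obtain ⟨a, ha, rfl⟩ := mem_image.1 hb
  obtain ⟨haA, rfl⟩ := mem_filter.1 ha
  refine mem_filter.2 ⟨Finset.mem_add.2 ⟨a, haA, 3 * d + e,
    three_mul_add_mem_cantorNumerals hd he, ?_⟩, ?_⟩ <;> simp only <;> omega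

lemma card_eq_sum_card_mod_three (S : Finset ℤ) :
    (#S : ℝ) = #{z ∈ S | z % 3 = 0} + #{z ∈ S | z % 3 = 1} + #{z ∈ S | z % 3 = 2} := by
  rw [card_eq_sum_card_fiberwise (f := (· % 3)) (t := {0, 1, 2}) fun z _ => by
    simp only [coe_insert, coe_singleton, Set.mem_insert_iff, Set.mem_singleton_iff]; omega]
  simp [add_assoc]

lemma natCast_rpow_cantorCodim_le (m : ℕ) : (m : ℝ) ^ γ ≤ m := by
  rcases m.eq_zero_or_pos with rfl | hm
  · simp [zero_rpow cantorCodim_pos.ne']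
  · exact rpow_le_self_of_one_le (by exact_mod_cast hm) cantorCodim_lt_one.le

theorem two_pow_mul_card_rpow_le_card_add_cantorNumerals (n : ℕ) (A : Finset ℤ) :
    2 ^ n * (#A : ℝ) ^ γ ≤ #(A + cantorNumerals n) := by
  induction n generalizing A with
  | zero => simpa [cantorNumerals] using natCast_rpow_cantorCodim_le #A
  | succ n ih =>
    set x : ℤ → ℝ := fun r => #{a ∈ A | a % 3 = r}
    set s : ℤ → ℝ := fun t => #{z ∈ A + cantorNumerals (n + 1) | z % 3 = t}
    have hle (r e t : ℤ) (he : e = 0 ∨ e = 2) (ht : (r + e) % 3 = t) : 2 ^ n * x r ^ γ ≤ s t := by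
      have := ih (residueQuotient A r)
      rw [card_residueQuotient] at this
      subst ht
      exact this.trans (Nat.cast_le.2 (card_residueQuotient_add_le A n he))
    have hmax (r e r' e' t : ℤ) (he : e = 0 ∨ e = 2) (ht : (r + e) % 3 = t)
        (he' : e' = 0 ∨ e' = 2) (ht' : (r' + e') % 3 = t) : 2 ^ n * max (x r) (x r') ^ γ ≤ s t := by
      rcases max_choice (x r) (x r') with h | h <;> rw [h]
      exacts [hle r e t he ht, hle r' e' t he' ht']
    calc 2 ^ (n + 1) * (#A : ℝ) ^ γ = 2 ^ n * (2 * (x 0 + x 1 + x 2) ^ γ) := by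
          rw [card_eq_sum_card_mod_three A]; ring
      _ ≤ 2 ^ n * (max (x 0) (x 1) ^ γ + max (x 1) (x 2) ^ γ + max (x 2) (x 0) ^ γ) := by
          gcongr
          exact two_mul_add_add_rpow_le_max (by positivity) (by positivity) (by positivity)
      _ ≤ s 0 + s 1 + s 2 := by
          rw [mul_add, mul_add]
          gcongr
          · exact hmax 0 0 1 2 0 (by norm_num) rfl (by norm_num) rfl
          · exact hmax 1 0 2 2 1 (by norm_num) rfl (by norm_num) rfl
          · exact hmax 2 0 0 2 2 (by norm_num) rfl (by norm_num) rfl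
      _ = #(A + cantorNumerals (n + 1)) := (card_eq_sum_card_mod_three _).symm

lemma middleThirdsCantor_eq_cantorSet : middleThirdsCantor = cantorSet := by
  rw [cantorSet_eq_zero_two_ofDigits]
  ext x
  constructor
  · rintro ⟨s, hs, rfl⟩
    have hlt (j : ℕ) : s j < 3 := by rcases hs j with h | h <;> omega
    refine ⟨fun j => ⟨s j, hlt j⟩, fun j => ?_, ?_⟩
    · rcases hs j with h | h <;> simp [Fin.ext_iff, h]
    · simp [Real.ofDigits, Real.ofDigitsTerm, div_eq_mul_inv]
  · rintro ⟨a, ha, rfl⟩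
    refine ⟨fun j => a j, fun j => ?_, ?_⟩
    · show (a j : ℕ) = 0 ∨ (a j : ℕ) = 2
      have := (a j).isLt
      have : (a j : ℕ) ≠ 1 := fun h => ha j (Fin.ext h)
      omega
    · simp [Real.ofDigits, Real.ofDigitsTerm, div_eq_mul_inv]

lemma add_div_three_mem_cantorSet {x e : ℝ} (hx : x ∈ cantorSet) (he : e = 0 ∨ e = 2) :
    (e + x) / 3 ∈ cantorSet := by
  rw [cantorSet_eq_union_halves]
  rcases he with rfl | rfl
  · exact Or.inl ⟨x, hx, by simp⟩
  · exact Or.inr ⟨x, hx, rfl⟩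

lemma add_div_three_pow_mem_cantorSet {n : ℕ} {d : ℤ} {x : ℝ} (hd : d ∈ cantorNumerals n)
    (hx : x ∈ cantorSet) : (d + x) / 3 ^ n ∈ cantorSet := by
  induction n generalizing d x with
  | zero =>
    rw [cantorNumerals, Finset.mem_singleton] at hd
    simpa [hd] using hx
  | succ n ih =>
    simp only [cantorNumerals, Finset.mem_union, Finset.mem_image] at hd
    obtain ⟨d, hd, rfl⟩ | ⟨d, hd, rfl⟩ := hd
    · convert ih hd (add_div_three_mem_cantorSet hx (Or.inl rfl)) using 1
      push_cast; field_simp; ring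
    · convert ih hd (add_div_three_mem_cantorSet hx (Or.inr rfl)) using 1
      push_cast; field_simp; ring

def triadicCell (n : ℕ) (a : ℤ) : Set ℝ := Ico (a / 3 ^ n) ((a + 1) / 3 ^ n)

lemma mem_triadicCell {n : ℕ} {a : ℤ} {x : ℝ} : x ∈ triadicCell n a ↔ ⌊x * 3 ^ n⌋ = a := by
  rw [triadicCell, Set.mem_Ico, Int.floor_eq_iff, div_le_iff₀ (by positivity),
    lt_div_iff₀ (by positivity)]

lemma dist_le_of_mem_triadicCell {n : ℕ} {a : ℤ} {x y : ℝ} (hx : x ∈ triadicCell n a)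
    (hy : y ∈ triadicCell n a) : dist x y ≤ (3 ^ n)⁻¹ := by
  convert Real.dist_le_of_mem_Icc (Ico_subset_Icc_self hx) (Ico_subset_Icc_self hy) using 1
  ring

lemma volume_triadicCell (n : ℕ) (a : ℤ) : volume (triadicCell n a) = ENNReal.ofReal (3 ^ n)⁻¹ := by
  rw [triadicCell, Real.volume_Ico]
  ring_nf

lemma volume_biUnion_triadicCell (n : ℕ) (A : Finset ℤ) :
    volume (⋃ a ∈ A, triadicCell n a) = ENNReal.ofReal (#A / 3 ^ n) := by
  rw [measure_biUnion_finset (fun a _ b _ hab => Set.disjoint_left.2 fun x hxa hxb =>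
      hab ((mem_triadicCell.1 hxa).symm.trans (mem_triadicCell.1 hxb)))
    fun _ _ => measurableSet_Ico]
  simp only [volume_triadicCell, Finset.sum_const, nsmul_eq_mul]
  rw [← ENNReal.ofReal_natCast, ← ENNReal.ofReal_mul (by positivity), div_eq_mul_inv]

lemma exists_triadicCell_cover {C : Set ℝ} (hC : Bornology.IsBounded C) (n : ℕ) :
    ∃ A : Finset ℤ, C ⊆ ⋃ a ∈ A, triadicCell n a ∧
      ∀ a ∈ A, triadicCell n a ⊆ cthickening (3 ^ n)⁻¹ C := by
  have hfin : ((fun x : ℝ => ⌊x * 3 ^ n⌋) '' C).Finite := by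
    refine (Set.finite_Icc ⌊sInf C * 3 ^ n⌋ ⌊sSup C * 3 ^ n⌋).subset ?_
    rintro _ ⟨x, hx, rfl⟩
    have := hC.subset_Icc_sInf_sSup hx
    exact ⟨Int.floor_mono (by gcongr; exact this.1), Int.floor_mono (by gcongr; exact this.2)⟩
  refine ⟨hfin.toFinset, fun x hx => mem_iUnion₂.2 ⟨_, hfin.mem_toFinset.2 ⟨x, hx, rfl⟩,
    mem_triadicCell.2 rfl⟩, ?_⟩
  intro a ha y hy
  obtain ⟨x, hx, rfl⟩ := hfin.mem_toFinset.1 ha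
  exact mem_cthickening_of_dist_le y x _ C hx
    (dist_le_of_mem_triadicCell hy (mem_triadicCell.2 rfl))

lemma biUnion_triadicCell_add_cantorNumerals_subset {n : ℕ} {A : Finset ℤ} {S : Set ℝ}
    (hS : ∀ a ∈ A, triadicCell n a ⊆ S) :
    ⋃ z ∈ A + cantorNumerals n, triadicCell n z ⊆ S + cantorSet := by
  simp only [iUnion_subset_iff, Finset.mem_add]
  rintro _ ⟨a, ha, d, hd, rfl⟩ x hx
  refine ⟨x - d / 3 ^ n, hS a ha (mem_triadicCell.2 ?_), d / 3 ^ n, ?_, sub_add_cancel x _⟩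
  · rw [sub_mul, div_mul_cancel₀ _ (by positivity), Int.floor_sub_intCast, mem_triadicCell.1 hx]
    ring
  · simpa using add_div_three_pow_mem_cantorSet hd zero_mem_cantorSet

lemma card_div_rpow_le_card_add_cantorNumerals_div (n : ℕ) (A : Finset ℤ) :
    ((#A : ℝ) / 3 ^ n) ^ γ ≤ #(A + cantorNumerals n) / 3 ^ n := by
  rw [div_rpow (by positivity) (by positivity), ← rpow_pow_comm (by norm_num),
    three_rpow_cantorCodim, div_le_div_iff₀ (by positivity) (by positivity)]
  calc (#A : ℝ) ^ γ * 3 ^ n = 2 ^ n * (#A : ℝ) ^ γ * (3 / 2) ^ n := by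
        rw [div_pow]; field_simp
    _ ≤ #(A + cantorNumerals n) * (3 / 2) ^ n := by
        gcongr; exact two_pow_mul_card_rpow_le_card_add_cantorNumerals n A

lemma cthickening_add_of_isCompact {E : Type*} [SeminormedAddCommGroup E] {s t : Set E}
    (hs : IsCompact s) (ht : IsCompact t) {δ : ℝ} (hδ : 0 ≤ δ) : cthickening δ s + t = cthickening δ (s + t) := by
  rw [← hs.add_closedBall_zero hδ, ← (hs.add ht).add_closedBall_zero hδ, add_right_comm]

theorem volume_rpow_le_volume_add_cantorSet {C : Set ℝ} (hC : IsCompact C) :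
    volume C ^ γ ≤ volume (C + cantorSet) := by
  have hlim : Tendsto (fun n : ℕ => volume (cthickening (3 ^ n)⁻¹ (C + cantorSet))) atTop
      (𝓝 (volume (C + cantorSet))) :=
    (tendsto_measure_cthickening_of_isCompact (hC.add isCompact_cantorSet)).comp
      (tendsto_inv_atTop_zero.comp (tendsto_pow_atTop_atTop_of_one_lt (by norm_num)))
  refine ge_of_tendsto' hlim fun n => ?_
  obtain ⟨A, hcover, hthick⟩ := exists_triadicCell_cover hC.isBounded n
  calc volume C ^ γ ≤ volume (⋃ a ∈ A, triadicCell n a) ^ γ :=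
        ENNReal.rpow_le_rpow (measure_mono hcover) cantorCodim_pos.le
    _ = ENNReal.ofReal (((#A : ℝ) / 3 ^ n) ^ γ) := by
        rw [volume_biUnion_triadicCell, ENNReal.ofReal_rpow_of_nonneg (by positivity)
          cantorCodim_pos.le]
    _ ≤ volume (⋃ z ∈ A + cantorNumerals n, triadicCell n z) := by
        rw [volume_biUnion_triadicCell]
        exact ENNReal.ofReal_le_ofReal (card_div_rpow_le_card_add_cantorNumerals_div n A)
    _ ≤ volume (cthickening (3 ^ n)⁻¹ C + cantorSet) :=
        measure_mono (biUnion_triadicCell_add_cantorNumerals_subset hthick)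
    _ = volume (cthickening (3 ^ n)⁻¹ (C + cantorSet)) := by
        rw [cthickening_add_of_isCompact hC isCompact_cantorSet (by positivity)]

end CantorSumset

theorem cantor_sumset_measure_bound (F : Set ℝ) (hF : MeasurableSet F) :
    volume F ^ (1 - Real.log 2 / Real.log 3) / 2 ≤ volume (F + middleThirdsCantor) := by
  have hγ : 0 < 1 - Real.log 2 / Real.log 3 := CantorSumset.cantorCodim_pos
  rw [CantorSumset.middleThirdsCantor_eq_cantorSet]
  refine ENNReal.half_le_self.trans ((ENNReal.le_rpow_inv_iff hγ).1 ?_)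
  rw [hF.measure_eq_iSup_isCompact]
  refine iSup₂_le fun C hCF => iSup_le fun hC => (ENNReal.le_rpow_inv_iff hγ).2 ?_
  exact (CantorSumset.volume_rpow_le_volume_add_cantorSet hC).trans
    (measure_mono (add_subset_add_right hCF))
end

section
/- Suppose λ is a probability measure on a compact set K ⊆ ℝ^d satisfying the convolution estimate ‖λ ∗ f‖_{L^q(ℝ^d)} ≤ C ‖f‖_{L^p(ℝ^d)} for some 1 < p ≤ q < ∞ and all f ∈ L^p. Then for every Borel set F ⊆ ℝ^d of finite measure, m_d(F)^{q'/p'} ≤ C' · m_d(F + K), where p' and q' are the conjugate exponents of p and q. -/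
open MeasureTheory Metric Set
open scoped Pointwise ENNReal

/-!
Test the convolution estimate on `f = χ_F`. The function `λ ∗ χ_F` has integral `m(F)` (Tonelli
and translation invariance) and vanishes outside `F + K`, so Hölder's inequality on `F + K` gives
`m(F) ≤ ‖λ ∗ χ_F‖_q m(F + K)^{1/q'} ≤ C m(F)^{1/p} m(F + K)^{1/q'}`; solving for `m(F)` yields
the bound with `C' = C^{q'}`.
-/

theorem eLpNorm_one_le_eLpNorm_mul_measure_rpow {α E : Type*} [MeasurableSpace α]
    {μ : Measure α} [NormedAddCommGroup E] {f : α → E} {s : Set α} {q : ℝ≥0∞} (hq : 1 ≤ q)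
    (hf : AEStronglyMeasurable f μ) (hfs : f.support ⊆ s) :
    eLpNorm f 1 μ ≤ eLpNorm f q μ * μ s ^ (1 - 1 / q.toReal) := by
  have hft : f.support ⊆ toMeasurable μ s := hfs.trans (subset_toMeasurable μ s)
  simpa [eLpNorm_restrict_eq_of_support_subset hft, measure_toMeasurable] using
    eLpNorm_le_eLpNorm_mul_rpow_measure_univ hq (hf.restrict (s := toMeasurable μ s))

theorem ENNReal.rpow_le_mul_of_le_mul_rpow {a b c : ℝ≥0∞} {s t : ℝ} (ha : a ≠ ⊤) (hs : s < 1)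
    (ht : 0 < t) (h : a ≤ c * a ^ s * b ^ t) : a ^ ((1 - s) / t) ≤ c ^ t⁻¹ * b := by
  rcases eq_or_ne a 0 with rfl | ha₀
  · simp [ENNReal.zero_rpow_of_pos (div_pos (sub_pos.2 hs) ht)]
  have hdiv : a ^ (1 - s) ≤ c * b ^ t := by
    rw [ENNReal.rpow_sub _ _ ha₀ ha, ENNReal.rpow_one,
      ENNReal.div_le_iff (ENNReal.rpow_pos ha₀.bot_lt ha).ne'
        (ENNReal.rpow_ne_top_of_ne_zero ha₀ ha)]
    rwa [mul_right_comm]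
  calc a ^ ((1 - s) / t) = (a ^ (1 - s)) ^ t⁻¹ := by rw [← ENNReal.rpow_mul, div_eq_mul_inv]
    _ ≤ (c * b ^ t) ^ t⁻¹ := by gcongr
    _ = c ^ t⁻¹ * b := by
      rw [ENNReal.mul_rpow_of_nonneg _ _ (inv_nonneg.2 ht.le), ← ENNReal.rpow_mul,
        mul_inv_cancel₀ ht.ne', ENNReal.rpow_one]

section Convolution

variable {G : Type*} [MeasurableSpace G] [AddGroup G] {ν : Measure G}

theorem support_integral_sub_subset {E : Type*} [NormedAddCommGroup E] [NormedSpace ℝ E]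
    {K : Set G} (hν : ν Kᶜ = 0) (f : G → E) :
    (fun y => ∫ x, f (y - x) ∂ν).support ⊆ f.support + K := by
  intro y hy
  by_contra hyK
  refine hy (integral_eq_zero_of_ae ?_)
  filter_upwards [measure_eq_zero_iff_ae_notMem.1 hν] with x hx
  by_contra hfx
  exact hyK ⟨y - x, hfx, x, not_notMem.1 hx, sub_add_cancel y x⟩

theorem enorm_integral_indicator_one_sub [MeasurableSub G] [IsFiniteMeasure ν] {F : Set G}
    (hF : MeasurableSet F) (y : G) :
    ‖∫ x, F.indicator (fun _ => (1 : ℝ)) (y - x) ∂ν‖ₑ = ν ((y - ·) ⁻¹' F) := by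
  have hpre : (fun x => F.indicator (fun _ => (1 : ℝ)) (y - x)) =
      ((y - ·) ⁻¹' F).indicator (fun _ => 1) := rfl
  rw [hpre, integral_indicator_const _ (measurable_const_sub y hF),
    smul_eq_mul, mul_one, Real.enorm_eq_ofReal measureReal_nonneg, ofReal_measureReal]

theorem lintegral_measure_sub_preimage [MeasurableAdd₂ G] [MeasurableNeg G] (μ : Measure G)
    [SFinite μ] [SFinite ν] [μ.IsAddRightInvariant] {F : Set G} (hF : MeasurableSet F) :
    ∫⁻ y, ν ((y - ·) ⁻¹' F) ∂μ = ν univ * μ F := by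
  have hs : MeasurableSet {z : G × G | z.1 - z.2 ∈ F} := hF.preimage measurable_sub
  calc ∫⁻ y, ν ((y - ·) ⁻¹' F) ∂μ = μ.prod ν {z | z.1 - z.2 ∈ F} := (Measure.prod_apply hs).symm
    _ = ∫⁻ x, μ ((· - x) ⁻¹' F) ∂ν := Measure.prod_apply_symm hs
    _ = ν univ * μ F := by
      simp_rw [sub_eq_add_neg, measure_preimage_add_right, lintegral_const, mul_comm]

theorem measure_le_eLpNorm_integral_indicator_sub_mul [MeasurableAdd₂ G] [MeasurableNeg G]
    (μ : Measure G) [SFinite μ] [μ.IsAddRightInvariant] [IsProbabilityMeasure ν] {K F : Set G}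
    (hν : ν Kᶜ = 0) (hF : MeasurableSet F) {q : ℝ≥0∞} (hq : 1 ≤ q) :
    μ F ≤ eLpNorm (fun y => ∫ x, F.indicator (fun _ => (1 : ℝ)) (y - x) ∂ν) q μ *
      μ (F + K) ^ (1 - 1 / q.toReal) := by
  set f := F.indicator fun _ => (1 : ℝ)
  have hf : Measurable f := measurable_const.indicator hF
  set g := fun y => ∫ x, f (y - x) ∂ν
  have hg_one : eLpNorm g 1 μ = μ F := by
    simp_rw [eLpNorm_one_eq_lintegral_enorm, g, f, enorm_integral_indicator_one_sub hF,
      lintegral_measure_sub_preimage μ hF, measure_univ, one_mul]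
  have hg_supp : g.support ⊆ F + K :=
    (support_integral_sub_subset hν f).trans (add_subset_add_right support_indicator_subset)
  have hg_meas : AEStronglyMeasurable g μ :=
    (StronglyMeasurable.integral_prod_right (f := fun y x => f (y - x))
      (hf.comp measurable_sub).stronglyMeasurable).aestronglyMeasurable
  exact hg_one ▸ eLpNorm_one_le_eLpNorm_mul_measure_rpow hq hg_meas hg_supp

end Convolution

theorem volume_sumset_from_convolution_bound_general (d : ℕ)
    (K : Set (EuclideanSpace ℝ (Fin d)))
    (lam : Measure (EuclideanSpace ℝ (Fin d))) [IsProbabilityMeasure lam]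
    (hsupp : lam Kᶜ = 0)
    (p q C : ℝ) (hp : 1 < p) (hpq : p ≤ q) (hC : 0 < C)
    (hconv : ∀ f : EuclideanSpace ℝ (Fin d) → ℝ, Measurable f →
      eLpNorm (fun y => ∫ x, f (y - x) ∂lam) (ENNReal.ofReal q) volume ≤
        ENNReal.ofReal C * eLpNorm f (ENNReal.ofReal p) volume) :
    ∃ C' : ℝ, 0 < C' ∧ ∀ F : Set (EuclideanSpace ℝ (Fin d)), MeasurableSet F →
      volume F < ⊤ →
      volume F ^ ((q / (q - 1)) / (p / (p - 1))) ≤ ENNReal.ofReal C' * volume (F + K) := by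
  have hq : 1 < q := hp.trans_le hpq
  refine ⟨C ^ (1 - q⁻¹)⁻¹, by positivity, fun F hF hFfin => ?_⟩
  set f := F.indicator fun _ => (1 : ℝ)
  have hf_norm : eLpNorm f (ENNReal.ofReal p) volume = volume F ^ p⁻¹ := by
    simp [f, eLpNorm_indicator_const hF, (zero_lt_one.trans hp).le, (zero_lt_one.trans hp)]
  have key : volume F ≤ ENNReal.ofReal C * volume F ^ p⁻¹ * volume (F + K) ^ (1 - q⁻¹) :=
    calc volume F
        ≤ eLpNorm (fun y => ∫ x, f (y - x) ∂lam) (ENNReal.ofReal q) volume *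
            volume (F + K) ^ (1 - q⁻¹) := by
          simpa [(zero_lt_one.trans hq).le] using measure_le_eLpNorm_integral_indicator_sub_mul
            volume hsupp hF (ENNReal.one_le_ofReal.2 hq.le)
      _ ≤ ENNReal.ofReal C * volume F ^ p⁻¹ * volume (F + K) ^ (1 - q⁻¹) := by
        rw [← hf_norm]; gcongr; exact hconv f (measurable_const.indicator hF)
  have hexp : (1 - p⁻¹) / (1 - q⁻¹) = (q / (q - 1)) / (p / (p - 1)) := by
    have : p - 1 ≠ 0 := by linarith
    have : q - 1 ≠ 0 := by linarith
    field_simp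
  rw [← hexp, ← ENNReal.ofReal_rpow_of_pos hC]
  exact ENNReal.rpow_le_mul_of_le_mul_rpow hFfin.ne (inv_lt_one_of_one_lt₀ hp)
    (sub_pos.2 (inv_lt_one_of_one_lt₀ hq)) key

theorem volume_sumset_from_convolution_bound (d : ℕ)
    (K : Set (EuclideanSpace ℝ (Fin d))) (hK : IsCompact K)
    (lam : Measure (EuclideanSpace ℝ (Fin d))) [IsProbabilityMeasure lam]
    (hsupp : lam Kᶜ = 0)
    (p q C : ℝ) (hp : 1 < p) (hpq : p ≤ q) (hC : 0 < C)
    (hconv : ∀ f : EuclideanSpace ℝ (Fin d) → ℝ, Measurable f →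
      eLpNorm (fun y => ∫ x, f (y - x) ∂lam) (ENNReal.ofReal q) volume ≤
        ENNReal.ofReal C * eLpNorm f (ENNReal.ofReal p) volume) :
    ∃ C' : ℝ, 0 < C' ∧ ∀ F : Set (EuclideanSpace ℝ (Fin d)), MeasurableSet F →
      volume F < ⊤ →
      volume F ^ ((q / (q - 1)) / (p / (p - 1))) ≤ ENNReal.ofReal C' * volume (F + K) :=
  volume_sumset_from_convolution_bound_general d K lam hsupp p q C hp hpq hC hconv
end
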